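/- arXiv:1811.11858 — 6 statements merged into one kernel-verified Lean document; each statement's English description precedes it below -/
import Mathlib

section
/- Let E and F be complex inner product spaces, let V : E → F be a linear isometry, let P be an orthogonal projection on E, let Q be an orthogonal projection on F, and let η ≥ 0. Suppose that |‖Q (V φ)‖² − ‖P φ‖²| ≤ η for every unit vector φ ∈ E. Then for every unit vector ψ ∈ E, ‖Q (V ψ) − V (P ψ)‖ ≤ 2·√η. (This is the step in the proofs of Theorems 3.4 and 3.5 deriving, from approximate agreement of the measurement Q after the isometry V with the measurement P, an approximate intertwining relation Q V ≈ V P.) -/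
open scoped InnerProductSpace

/-- Pythagoras for a self-adjoint idempotent. -/
lemma proj_pythagoras {F : Type*} [NormedAddCommGroup F] [InnerProductSpace ℂ F]
    (Q : F →L[ℂ] F) (hQidem : ∀ x, Q (Q x) = Q x)
    (hQsa : ∀ x y, ⟪Q x, y⟫_ℂ = ⟪x, Q y⟫_ℂ) (y : F) :
    ‖Q y‖ ^ 2 + ‖y - Q y‖ ^ 2 = ‖y‖ ^ 2 := by
  have horth : ⟪Q y, y - Q y⟫_ℂ = 0 := by
    rw [inner_sub_right, hQsa y y, hQsa y (Q y), hQidem, sub_self]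
  have := norm_add_sq_eq_norm_sq_add_norm_sq_of_inner_eq_zero (Q y) (y - Q y) horth
  rw [add_sub_cancel] at this
  linarith

/-- From approximate agreement of the measurement `Q` after the isometry `V` with the
measurement `P`, one derives the approximate intertwining relation `Q V ≈ V P`. -/
theorem approx_intertwining
    {E F : Type*} [NormedAddCommGroup E] [InnerProductSpace ℂ E]
    [NormedAddCommGroup F] [InnerProductSpace ℂ F]
    (V : E →ₗᵢ[ℂ] F)
    (P : E →L[ℂ] E)
    (hPidem : ∀ x, P (P x) = P x)
    (hPsa : ∀ x y, ⟪P x, y⟫_ℂ = ⟪x, P y⟫_ℂ)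
    (Q : F →L[ℂ] F)
    (hQidem : ∀ x, Q (Q x) = Q x)
    (hQsa : ∀ x y, ⟪Q x, y⟫_ℂ = ⟪x, Q y⟫_ℂ)
    (η : ℝ) (hη : 0 ≤ η)
    (hcorr : ∀ φ : E, ‖φ‖ = 1 → |‖Q (V φ)‖ ^ 2 - ‖P φ‖ ^ 2| ≤ η)
    (ψ : E) (hψ : ‖ψ‖ = 1) :
    ‖Q (V ψ) - V (P ψ)‖ ≤ 2 * Real.sqrt η := by
  -- scaled version of the hypothesis
  have hscaled : ∀ x : E, |‖Q (V x)‖ ^ 2 - ‖P x‖ ^ 2| ≤ η * ‖x‖ ^ 2 := by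
    intro x
    rcases eq_or_ne x 0 with rfl | hx
    · simp
    · have hnx : (0:ℝ) < ‖x‖ := norm_pos_iff.mpr hx
      set c : ℂ := ((‖x‖ : ℂ))⁻¹
      have hcnorm : ‖c‖ = ‖x‖⁻¹ := by
        simp [c]
      have hφ : ‖c • x‖ = 1 := by
        rw [norm_smul, hcnorm, inv_mul_cancel₀ hnx.ne']
      have h := hcorr (c • x) hφ
      have h1 : ‖Q (V (c • x))‖ = ‖x‖⁻¹ * ‖Q (V x)‖ := by
        rw [map_smul, map_smul, norm_smul, hcnorm]
      have h2 : ‖P (c • x)‖ = ‖x‖⁻¹ * ‖P x‖ := by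
        rw [map_smul, norm_smul, hcnorm]
      rw [h1, h2, mul_pow, mul_pow, ← mul_sub, abs_mul,
        abs_of_nonneg (by positivity : (0:ℝ) ≤ (‖x‖⁻¹)^2)] at h
      have hx2 : (0:ℝ) < ‖x‖ ^ 2 := by positivity
      calc |‖Q (V x)‖ ^ 2 - ‖P x‖ ^ 2|
          = ‖x‖ ^ 2 * ((‖x‖⁻¹) ^ 2 * |‖Q (V x)‖ ^ 2 - ‖P x‖ ^ 2|) := by
            field_simp
        _ ≤ ‖x‖ ^ 2 * η := by
            exact mul_le_mul_of_nonneg_left h hx2.le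
        _ = η * ‖x‖ ^ 2 := mul_comm _ _
  -- Pythagoras for P on ψ
  have hPy := proj_pythagoras P hPidem hPsa ψ
  rw [hψ] at hPy
  have hPle : ‖P ψ‖ ^ 2 ≤ 1 := by nlinarith [sq_nonneg ‖ψ - P ψ‖]
  have hPcle : ‖ψ - P ψ‖ ^ 2 ≤ 1 := by nlinarith [sq_nonneg ‖P ψ‖]
  -- bound on ‖Q V Pψ - V Pψ‖
  have hA : ‖Q (V (P ψ)) - V (P ψ)‖ ^ 2 ≤ η := by
    have hpy := proj_pythagoras Q hQidem hQsa (V (P ψ))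
    have hVn : ‖V (P ψ)‖ = ‖P ψ‖ := V.norm_map _
    have hs := hscaled (P ψ)
    rw [hPidem] at hs
    have habs : ‖P ψ‖ ^ 2 - ‖Q (V (P ψ))‖ ^ 2 ≤ η * ‖P ψ‖ ^ 2 := by
      have := abs_le.mp hs
      linarith [this.1]
    have : ‖V (P ψ) - Q (V (P ψ))‖ ^ 2 ≤ η * ‖P ψ‖ ^ 2 := by
      rw [hVn] at hpy; linarith
    calc ‖Q (V (P ψ)) - V (P ψ)‖ ^ 2 = ‖V (P ψ) - Q (V (P ψ))‖ ^ 2 := by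
          rw [← neg_sub, norm_neg]
      _ ≤ η * ‖P ψ‖ ^ 2 := this
      _ ≤ η * 1 := mul_le_mul_of_nonneg_left hPle hη
      _ = η := mul_one η
  -- bound on ‖Q V (ψ - Pψ)‖
  have hB : ‖Q (V (ψ - P ψ))‖ ^ 2 ≤ η := by
    have hs := hscaled (ψ - P ψ)
    have hP0 : P (ψ - P ψ) = 0 := by
      rw [map_sub, hPidem, sub_self]
    rw [hP0] at hs
    simp only [norm_zero] at hs
    have := abs_le.mp hs
    calc ‖Q (V (ψ - P ψ))‖ ^ 2 ≤ η * ‖ψ - P ψ‖ ^ 2 := by linarith [this.2]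
      _ ≤ η * 1 := mul_le_mul_of_nonneg_left hPcle hη
      _ = η := mul_one η
  have hsq : Real.sqrt η * Real.sqrt η = η := Real.mul_self_sqrt hη
  have hA' : ‖Q (V (P ψ)) - V (P ψ)‖ ≤ Real.sqrt η := by
    rw [← Real.sqrt_sq (norm_nonneg _)]
    exact Real.sqrt_le_sqrt hA
  have hB' : ‖Q (V (ψ - P ψ))‖ ≤ Real.sqrt η := by
    rw [← Real.sqrt_sq (norm_nonneg _)]
    exact Real.sqrt_le_sqrt hB
  have hdecomp : Q (V ψ) - V (P ψ)
      = (Q (V (P ψ)) - V (P ψ)) + Q (V (ψ - P ψ)) := by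
    rw [map_sub, map_sub]
    abel
  calc ‖Q (V ψ) - V (P ψ)‖
      = ‖(Q (V (P ψ)) - V (P ψ)) + Q (V (ψ - P ψ))‖ := by rw [hdecomp]
    _ ≤ ‖Q (V (P ψ)) - V (P ψ)‖ + ‖Q (V (ψ - P ψ))‖ := norm_add_le _ _
    _ ≤ Real.sqrt η + Real.sqrt η := add_le_add hA' hB'
    _ = 2 * Real.sqrt η := by ring
end

section
/- Let E and F be complex inner product spaces, let V : E → F be a linear isometry, let P be an orthogonal projection on E, let Q be an orthogonal projection on F, and let η ≥ 0. Suppose that |‖Q (V φ)‖² − ‖P φ‖²| ≤ η for every unit vector φ ∈ E. Then for every unit vector ψ ∈ E, ‖(id − 2·Q)(V ψ) − V ((id − 2·P) ψ)‖ ≤ 4·√η. (This is Equation (18) in the proof of Theorem 3.4: the reflection attack on the ciphertext side approximately implements the corresponding reflection on the plaintext side.) -/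
open scoped InnerProductSpace

/-- The reflection attack on the ciphertext side approximately implements the corresponding
reflection on the plaintext side. -/
theorem reflection_attack_approx
    {E F : Type*} [NormedAddCommGroup E] [InnerProductSpace ℂ E]
    [NormedAddCommGroup F] [InnerProductSpace ℂ F]
    (V : E →ₗᵢ[ℂ] F)
    (P : E →L[ℂ] E)
    (hPidem : ∀ x, P (P x) = P x)
    (hPsa : ∀ x y, ⟪P x, y⟫_ℂ = ⟪x, P y⟫_ℂ)
    (Q : F →L[ℂ] F)
    (hQidem : ∀ x, Q (Q x) = Q x)
    (hQsa : ∀ x y, ⟪Q x, y⟫_ℂ = ⟪x, Q y⟫_ℂ)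
    (η : ℝ) (hη : 0 ≤ η)
    (hcorr : ∀ φ : E, ‖φ‖ = 1 → |‖Q (V φ)‖ ^ 2 - ‖P φ‖ ^ 2| ≤ η)
    (ψ : E) (hψ : ‖ψ‖ = 1) :
    ‖(V ψ - (2 : ℂ) • Q (V ψ)) - V (ψ - (2 : ℂ) • P ψ)‖ ≤ 4 * Real.sqrt η := by
  have hs : 0 ≤ Real.sqrt η := Real.sqrt_nonneg η
  -- Pythagoras for Q
  have hQpyth : ∀ x : F, ‖Q x‖ ^ 2 + ‖x - Q x‖ ^ 2 = ‖x‖ ^ 2 := by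
    intro x
    have horth : ⟪Q x, x - Q x⟫_ℂ = 0 := by
      rw [inner_sub_right, hQsa x (Q x), hQidem, hQsa x x]
      ring
    have hx : x = Q x + (x - Q x) := by abel
    calc ‖Q x‖ ^ 2 + ‖x - Q x‖ ^ 2
        = ‖Q x + (x - Q x)‖ ^ 2 := by
          rw [@norm_add_sq ℂ, horth]; simp
      _ = ‖x‖ ^ 2 := by rw [← hx]
  have hPpyth : ‖P ψ‖ ^ 2 + ‖ψ - P ψ‖ ^ 2 = 1 := by
    have horth : ⟪P ψ, ψ - P ψ⟫_ℂ = 0 := by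
      rw [inner_sub_right, hPsa ψ (P ψ), hPidem, hPsa ψ ψ]
      ring
    have hx : ψ = P ψ + (ψ - P ψ) := by abel
    calc ‖P ψ‖ ^ 2 + ‖ψ - P ψ‖ ^ 2
        = ‖P ψ + (ψ - P ψ)‖ ^ 2 := by
          rw [@norm_add_sq ℂ, horth]; simp
      _ = 1 := by rw [← hx, hψ]; norm_num
  -- Claim A
  have claimA : ∀ u : E, P u = u → ‖Q (V u) - V u‖ ≤ Real.sqrt η * ‖u‖ := by
    intro u hu
    rcases eq_or_ne u 0 with h0 | h0
    · simp [h0]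
    · set c : ℂ := (‖u‖ : ℂ) with hc
      have hcn : ‖u‖ ≠ 0 := norm_ne_zero_iff.mpr h0
      set φ : E := (‖u‖ : ℂ)⁻¹ • u with hφ
      have hφ1 : ‖φ‖ = 1 := by
        rw [hφ, norm_smul]
        simp [hcn]
      have hPφ : P φ = φ := by rw [hφ, map_smul, hu]
      have hkey : |‖Q (V φ)‖ ^ 2 - 1| ≤ η := by
        have := hcorr φ hφ1
        rw [hPφ, hφ1] at this
        simpa using this
      have hge : 1 - ‖Q (V φ)‖ ^ 2 ≤ η := by
        have := abs_le.mp hkey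
        linarith [this.1]
      have hsq : ‖Q (V φ) - V φ‖ ^ 2 ≤ η := by
        have h1 : ‖V φ - Q (V φ)‖ ^ 2 = 1 - ‖Q (V φ)‖ ^ 2 := by
          have := hQpyth (V φ)
          rw [V.norm_map, hφ1] at this
          linarith
        have h2 : ‖Q (V φ) - V φ‖ = ‖V φ - Q (V φ)‖ := by rw [norm_sub_rev]
        rw [h2, h1]; exact hge
      have hle : ‖Q (V φ) - V φ‖ ≤ Real.sqrt η := by
        rw [← Real.sqrt_sq (norm_nonneg _)]
        exact Real.sqrt_le_sqrt hsq
      have huφ : u = c • φ := by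
        rw [hφ, smul_smul, hc, mul_inv_cancel₀ (by exact_mod_cast hcn), one_smul]
      have : Q (V u) - V u = c • (Q (V φ) - V φ) := by
        rw [huφ, map_smul, map_smul, map_smul, smul_sub]
      rw [this, norm_smul]
      have hcnorm : ‖c‖ = ‖u‖ := by
        rw [hc]; simp [abs_of_nonneg (norm_nonneg u)]
      rw [hcnorm]
      calc ‖u‖ * ‖Q (V φ) - V φ‖ ≤ ‖u‖ * Real.sqrt η :=
            mul_le_mul_of_nonneg_left hle (norm_nonneg u)
        _ = Real.sqrt η * ‖u‖ := mul_comm _ _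
  -- Claim B
  have claimB : ∀ w : E, P w = 0 → ‖Q (V w)‖ ≤ Real.sqrt η * ‖w‖ := by
    intro w hw
    rcases eq_or_ne w 0 with h0 | h0
    · simp [h0]
    · set c : ℂ := (‖w‖ : ℂ) with hc
      have hcn : ‖w‖ ≠ 0 := norm_ne_zero_iff.mpr h0
      set φ : E := (‖w‖ : ℂ)⁻¹ • w with hφ
      have hφ1 : ‖φ‖ = 1 := by
        rw [hφ, norm_smul]; simp [hcn]
      have hPφ : P φ = 0 := by rw [hφ, map_smul, hw, smul_zero]
      have hkey : |‖Q (V φ)‖ ^ 2 - 0| ≤ η := by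
        have := hcorr φ hφ1
        rw [hPφ, norm_zero] at this
        simpa using this
      have hsq : ‖Q (V φ)‖ ^ 2 ≤ η := by
        rw [sub_zero] at hkey
        exact le_trans (le_abs_self _) hkey
      have hle : ‖Q (V φ)‖ ≤ Real.sqrt η := by
        rw [← Real.sqrt_sq (norm_nonneg _)]
        exact Real.sqrt_le_sqrt hsq
      have hwφ : w = c • φ := by
        rw [hφ, smul_smul, hc, mul_inv_cancel₀ (by exact_mod_cast hcn), one_smul]
      have : Q (V w) = c • Q (V φ) := by rw [hwφ, map_smul, map_smul]
      rw [this, norm_smul]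
      have hcnorm : ‖c‖ = ‖w‖ := by
        rw [hc]; simp [abs_of_nonneg (norm_nonneg w)]
      rw [hcnorm]
      calc ‖w‖ * ‖Q (V φ)‖ ≤ ‖w‖ * Real.sqrt η :=
            mul_le_mul_of_nonneg_left hle (norm_nonneg w)
        _ = Real.sqrt η * ‖w‖ := mul_comm _ _
  -- Combine
  set u := P ψ with hu
  set w := ψ - P ψ with hw
  have hA := claimA u (hPidem ψ)
  have hB := claimB w (by rw [hw, map_sub, hPidem, sub_self])
  have hsum : ‖u‖ + ‖w‖ ≤ 2 := by
    nlinarith [norm_nonneg u, norm_nonneg w, sq_nonneg (‖u‖ - ‖w‖), hPpyth]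
  have hdecomp : Q (V ψ) - V (P ψ) = (Q (V u) - V u) + Q (V w) := by
    have h1 : V ψ = V u + V w := by
      rw [hu, hw, ← map_add]; congr 1; abel
    rw [h1, map_add]; abel
  have hmid : ‖Q (V ψ) - V (P ψ)‖ ≤ 2 * Real.sqrt η := by
    rw [hdecomp]
    calc ‖(Q (V u) - V u) + Q (V w)‖ ≤ ‖Q (V u) - V u‖ + ‖Q (V w)‖ := norm_add_le _ _
      _ ≤ Real.sqrt η * ‖u‖ + Real.sqrt η * ‖w‖ := add_le_add hA hB
      _ = Real.sqrt η * (‖u‖ + ‖w‖) := by ring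
      _ ≤ Real.sqrt η * 2 := mul_le_mul_of_nonneg_left hsum hs
      _ = 2 * Real.sqrt η := mul_comm _ _
  have hfinal : (V ψ - (2 : ℂ) • Q (V ψ)) - V (ψ - (2 : ℂ) • P ψ)
      = -((2 : ℂ) • (Q (V ψ) - V (P ψ))) := by
    rw [map_sub, map_smul]
    simp only [smul_sub]
    abel
  rw [hfinal, norm_neg, norm_smul]
  have : ‖(2 : ℂ)‖ = 2 := by norm_num
  rw [this]
  linarith
end

section
/- Let E and F be complex inner product spaces, let V : E → F be a linear isometry, let P₀, P₁ be orthogonal projections on E, let Q₀, Q₁ be orthogonal projections on F, and let η, ε ≥ 0. Assume: (correctness) for every unit vector φ ∈ E and each i ∈ {0,1}, |‖Q_i (V φ)‖² − ‖P_i φ‖²| ≤ η; and (security against the reflection attack) for every unit vector ψ ∈ E, |‖Q₁ ((id − 2·Q₀)(V ψ))‖² − ‖P₁ ψ‖²| ≤ ε and |‖Q₀ ((id − 2·Q₁)(V ψ))‖² − ‖P₀ ψ‖²| ≤ ε. Then for every unit vector ψ ∈ E, |‖P₀ (P₁ ψ)‖² − ‖P₁ (P₀ ψ)‖²| ≤ (ε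 + η + 8·√η)/2. (This is the purified mathematical core of Theorem 3.4: a signing isometry that is approximately correct for two measurements and secure against reflection attacks forces the measurements to approximately commute on every state.) -/
open scoped InnerProductSpace

section AuxLemmas

variable {E : Type*} [NormedAddCommGroup E] [InnerProductSpace ℂ E]
variable {F : Type*} [NormedAddCommGroup F] [InnerProductSpace ℂ F]

private lemma proj_contract (P : E →L[ℂ] E) (hidem : ∀ x, P (P x) = P x)
    (hsa : ∀ x y, ⟪P x, y⟫_ℂ = ⟪x, P y⟫_ℂ) (x : E) : ‖P x‖ ≤ ‖x‖ := by
  have h2 : ⟪P x, P x⟫_ℂ = ⟪x, P x⟫_ℂ := by rw [hsa, hidem]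
  have h3 := inner_self_eq_norm_sq (𝕜 := ℂ) (P x)
  have h4 := re_inner_le_norm (𝕜 := ℂ) x (P x)
  rw [h2] at h3
  rcases (norm_nonneg (P x)).eq_or_lt with h | h
  · rw [← h]; exact norm_nonneg x
  · have h5 : ‖P x‖ * ‖P x‖ ≤ ‖x‖ * ‖P x‖ := by nlinarith
    exact le_of_mul_le_mul_right h5 h

private lemma proj_pyth (P : E →L[ℂ] E) (hidem : ∀ x, P (P x) = P x)
    (hsa : ∀ x y, ⟪P x, y⟫_ℂ = ⟪x, P y⟫_ℂ) (x : E) :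
    ‖x‖ ^ 2 = ‖P x‖ ^ 2 + ‖x - P x‖ ^ 2 := by
  have horth : ⟪P x, x - P x⟫_ℂ = 0 := by
    rw [hsa, map_sub, hidem, sub_self, inner_zero_right]
  have hx : P x + (x - P x) = x := by abel
  calc ‖x‖ ^ 2 = ‖P x + (x - P x)‖ ^ 2 := by rw [hx]
    _ = ‖P x‖ ^ 2 + 2 * RCLike.re ⟪P x, x - P x⟫_ℂ + ‖x - P x‖ ^ 2 :=
        norm_add_sq (𝕜 := ℂ) _ _
    _ = ‖P x‖ ^ 2 + ‖x - P x‖ ^ 2 := by rw [horth]; simp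

private lemma corr_hom (V : E →ₗᵢ[ℂ] F) (P : E →L[ℂ] E) (Q : F →L[ℂ] F) (η : ℝ)
    (h : ∀ φ : E, ‖φ‖ = 1 → |‖Q (V φ)‖ ^ 2 - ‖P φ‖ ^ 2| ≤ η) :
    ∀ φ : E, |‖Q (V φ)‖ ^ 2 - ‖P φ‖ ^ 2| ≤ η * ‖φ‖ ^ 2 := by
  intro φ
  rcases eq_or_ne φ 0 with rfl | hφ
  · simp
  · have hc : (0:ℝ) < ‖φ‖ := norm_pos_iff.mpr hφ
    have hunit : ‖((‖φ‖ : ℂ))⁻¹ • φ‖ = 1 := by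
      rw [norm_smul, norm_inv]
      simp [hc.ne']
    have h2 := h _ hunit
    have e1 : ‖Q (V (((‖φ‖ : ℂ))⁻¹ • φ))‖ = ‖φ‖⁻¹ * ‖Q (V φ)‖ := by
      rw [map_smul, map_smul, norm_smul, norm_inv]
      simp
    have e2 : ‖P (((‖φ‖ : ℂ))⁻¹ • φ)‖ = ‖φ‖⁻¹ * ‖P φ‖ := by
      rw [map_smul, norm_smul, norm_inv]
      simp
    rw [e1, e2, mul_pow, mul_pow] at h2
    have h3 : ‖φ‖⁻¹ ^ 2 * ‖Q (V φ)‖ ^ 2 - ‖φ‖⁻¹ ^ 2 * ‖P φ‖ ^ 2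
        = ‖φ‖⁻¹ ^ 2 * (‖Q (V φ)‖ ^ 2 - ‖P φ‖ ^ 2) := by ring
    rw [h3, abs_mul, abs_of_nonneg (by positivity : (0:ℝ) ≤ ‖φ‖⁻¹ ^ 2)] at h2
    calc |‖Q (V φ)‖ ^ 2 - ‖P φ‖ ^ 2|
        = ‖φ‖ ^ 2 * (‖φ‖⁻¹ ^ 2 * |‖Q (V φ)‖ ^ 2 - ‖P φ‖ ^ 2|) := by
          field_simp
      _ ≤ ‖φ‖ ^ 2 * η := by
          exact mul_le_mul_of_nonneg_left h2 (by positivity)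
      _ = η * ‖φ‖ ^ 2 := mul_comm _ _

private lemma side_num (s x w α β : ℝ) (hs0 : 0 ≤ s) (hs1 : s ≤ 1)
    (hx0 : 0 ≤ x) (hw0 : 0 ≤ w) (hβ0 : 0 ≤ β) (hα1 : α ≤ 1)
    (hx1 : x ≤ 1) (hwα : w ≤ α)
    (hxw : |x - w| ≤ s) (hwβ : |w ^ 2 - β ^ 2| ≤ s ^ 2 * α ^ 2) :
    |x ^ 2 - β ^ 2| ≤ 2 * s := by
  have hα0 : 0 ≤ α := le_trans hw0 hwα
  rw [abs_le] at hxw hwβ ⊢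
  obtain ⟨h1, h2⟩ := hxw
  obtain ⟨h3, h4⟩ := hwβ
  have hα2 : α ^ 2 ≤ 1 := by nlinarith
  have A1 : s ^ 2 * α ^ 2 ≤ s ^ 2 := by
    have := mul_le_mul_of_nonneg_left hα2 (sq_nonneg s)
    linarith
  have A2 : s ^ 2 ≤ s := by nlinarith
  constructor
  · -- β² - x² ≤ 2s
    rcases le_or_gt w s with hws | hws
    · nlinarith [sq_nonneg x, mul_self_le_mul_self hw0 hws]
    · nlinarith [mul_nonneg (show (0:ℝ) ≤ x - (w - s) by linarith)
        (show (0:ℝ) ≤ x + (w - s) by linarith),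
        mul_le_mul_of_nonneg_left (le_trans hwα hα1) hs0]
  · -- x² - β² ≤ 2s
    rcases le_or_gt (w + s) 1 with hc | hc
    · nlinarith [mul_self_le_mul_self hx0 (show x ≤ w + s by linarith),
        mul_le_mul_of_nonneg_left (show s ≤ 1 - w by linarith) hs0]
    · nlinarith [mul_self_le_mul_self hx0 hx1,
        mul_self_le_mul_self (show (0:ℝ) ≤ 1 - s by linarith)
          (show 1 - s ≤ w by linarith)]

private lemma side_est (V : E →ₗᵢ[ℂ] F) (P₀ P₁ : E →L[ℂ] E)
    (hP₀idem : ∀ x, P₀ (P₀ x) = P₀ x)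
    (hP₀sa : ∀ x y, ⟪P₀ x, y⟫_ℂ = ⟪x, P₀ y⟫_ℂ)
    (Q₀ Q₁ : F →L[ℂ] F)
    (hQ₀idem : ∀ x, Q₀ (Q₀ x) = Q₀ x)
    (hQ₀sa : ∀ x y, ⟪Q₀ x, y⟫_ℂ = ⟪x, Q₀ y⟫_ℂ)
    (hQ₁idem : ∀ x, Q₁ (Q₁ x) = Q₁ x)
    (hQ₁sa : ∀ x y, ⟪Q₁ x, y⟫_ℂ = ⟪x, Q₁ y⟫_ℂ)
    (η : ℝ) (hη : 0 ≤ η) (hη1 : η ≤ 1)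
    (hc₀ : ∀ φ : E, |‖Q₀ (V φ)‖ ^ 2 - ‖P₀ φ‖ ^ 2| ≤ η * ‖φ‖ ^ 2)
    (hc₁ : ∀ φ : E, |‖Q₁ (V φ)‖ ^ 2 - ‖P₁ φ‖ ^ 2| ≤ η * ‖φ‖ ^ 2)
    (ψ : E) (hψ : ‖ψ‖ = 1) :
    |‖Q₁ (Q₀ (V ψ))‖ ^ 2 - ‖P₁ (P₀ ψ)‖ ^ 2| ≤ 2 * Real.sqrt η := by
  have hs0 : 0 ≤ Real.sqrt η := Real.sqrt_nonneg η
  have hs2 : Real.sqrt η ^ 2 = η := Real.sq_sqrt hη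
  have hs1 : Real.sqrt η ≤ 1 := by nlinarith
  have haP : P₀ (P₀ ψ) = P₀ ψ := hP₀idem ψ
  have hap : P₀ (ψ - P₀ ψ) = 0 := by rw [map_sub P₀, haP, sub_self]
  have hpyth : ‖P₀ ψ‖ ^ 2 + ‖ψ - P₀ ψ‖ ^ 2 = 1 := by
    have h := proj_pyth P₀ hP₀idem hP₀sa ψ
    rw [hψ] at h
    nlinarith [h]
  -- key estimate: ‖Q₀ (V ψ) - V (P₀ ψ)‖² ≤ η
  have e1 : ‖Q₀ (V ψ) - V (P₀ ψ)‖ ^ 2 ≤ η := by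
    have hdec : Q₀ (V ψ) - V (P₀ ψ)
        = Q₀ (V (ψ - P₀ ψ)) - (V (P₀ ψ) - Q₀ (V (P₀ ψ))) := by
      rw [map_sub V, map_sub Q₀]; abel
    have horth : ⟪Q₀ (V (ψ - P₀ ψ)), V (P₀ ψ) - Q₀ (V (P₀ ψ))⟫_ℂ = 0 := by
      rw [hQ₀sa, map_sub Q₀, hQ₀idem, sub_self, inner_zero_right]
    have hsum : ‖Q₀ (V ψ) - V (P₀ ψ)‖ ^ 2
        = ‖Q₀ (V (ψ - P₀ ψ))‖ ^ 2 + ‖V (P₀ ψ) - Q₀ (V (P₀ ψ))‖ ^ 2 := by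
      rw [hdec, norm_sub_sq (𝕜 := ℂ), horth]
      simp
    have t1 : ‖Q₀ (V (ψ - P₀ ψ))‖ ^ 2 ≤ η * ‖ψ - P₀ ψ‖ ^ 2 := by
      have h := hc₀ (ψ - P₀ ψ)
      rw [hap] at h
      rw [abs_le] at h
      have := h.2
      simpa using this
    have t2 : ‖V (P₀ ψ) - Q₀ (V (P₀ ψ))‖ ^ 2 ≤ η * ‖P₀ ψ‖ ^ 2 := by
      have hp := proj_pyth Q₀ hQ₀idem hQ₀sa (V (P₀ ψ))
      have hV : ‖V (P₀ ψ)‖ = ‖P₀ ψ‖ := V.norm_map _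
      have h := hc₀ (P₀ ψ)
      rw [haP, abs_le] at h
      rw [hV] at hp
      linarith [h.1]
    have hsplit : η * ‖ψ - P₀ ψ‖ ^ 2 + η * ‖P₀ ψ‖ ^ 2 = η := by
      linear_combination η * hpyth
    linarith
  have hd : |‖Q₁ (Q₀ (V ψ))‖ - ‖Q₁ (V (P₀ ψ))‖| ≤ Real.sqrt η := by
    have h1 : |‖Q₁ (Q₀ (V ψ))‖ - ‖Q₁ (V (P₀ ψ))‖|
        ≤ ‖Q₁ (Q₀ (V ψ)) - Q₁ (V (P₀ ψ))‖ := abs_norm_sub_norm_le _ _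
    have h2 : Q₁ (Q₀ (V ψ)) - Q₁ (V (P₀ ψ)) = Q₁ (Q₀ (V ψ) - V (P₀ ψ)) :=
      (map_sub Q₁ _ _).symm
    have h3 : ‖Q₁ (Q₀ (V ψ) - V (P₀ ψ))‖ ≤ ‖Q₀ (V ψ) - V (P₀ ψ)‖ :=
      proj_contract Q₁ hQ₁idem hQ₁sa _
    have h4 : ‖Q₀ (V ψ) - V (P₀ ψ)‖ ≤ Real.sqrt η := by
      rw [show ‖Q₀ (V ψ) - V (P₀ ψ)‖ = Real.sqrt (‖Q₀ (V ψ) - V (P₀ ψ)‖ ^ 2) from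
        (Real.sqrt_sq (norm_nonneg _)).symm]
      exact Real.sqrt_le_sqrt e1
    rw [h2] at h1
    linarith
  have hwβ : |‖Q₁ (V (P₀ ψ))‖ ^ 2 - ‖P₁ (P₀ ψ)‖ ^ 2|
      ≤ Real.sqrt η ^ 2 * ‖P₀ ψ‖ ^ 2 := by
    rw [hs2]; exact hc₁ (P₀ ψ)
  have hx1 : ‖Q₁ (Q₀ (V ψ))‖ ≤ 1 := by
    calc ‖Q₁ (Q₀ (V ψ))‖ ≤ ‖Q₀ (V ψ)‖ := proj_contract Q₁ hQ₁idem hQ₁sa _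
      _ ≤ ‖V ψ‖ := proj_contract Q₀ hQ₀idem hQ₀sa _
      _ = 1 := by rw [V.norm_map, hψ]
  have hwα : ‖Q₁ (V (P₀ ψ))‖ ≤ ‖P₀ ψ‖ := by
    calc ‖Q₁ (V (P₀ ψ))‖ ≤ ‖V (P₀ ψ)‖ := proj_contract Q₁ hQ₁idem hQ₁sa _
      _ = ‖P₀ ψ‖ := V.norm_map _
  have hα1 : ‖P₀ ψ‖ ≤ 1 := by
    calc ‖P₀ ψ‖ ≤ ‖ψ‖ := proj_contract P₀ hP₀idem hP₀sa ψ
      _ = 1 := hψ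
  exact side_num (Real.sqrt η) _ _ _ _ hs0 hs1 (norm_nonneg _) (norm_nonneg _)
    (norm_nonneg _) hα1 hx1 hwα hd hwβ

private lemma reflect_expand (Q₀ Q₁ : F →L[ℂ] F)
    (hQ₁idem : ∀ x, Q₁ (Q₁ x) = Q₁ x)
    (hQ₁sa : ∀ x y, ⟪Q₁ x, y⟫_ℂ = ⟪x, Q₁ y⟫_ℂ) (u : F) :
    ‖Q₁ (u - (2 : ℂ) • Q₀ u)‖ ^ 2
      = ‖Q₁ u‖ ^ 2 - 4 * RCLike.re ⟪Q₁ u, Q₀ u⟫_ℂ + 4 * ‖Q₁ (Q₀ u)‖ ^ 2 := by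
  have h0 : Q₁ (u - (2 : ℂ) • Q₀ u) = Q₁ u - (2 : ℂ) • Q₁ (Q₀ u) := by
    rw [map_sub, map_smul]
  have hin : ⟪Q₁ u, Q₁ (Q₀ u)⟫_ℂ = ⟪Q₁ u, Q₀ u⟫_ℂ := by
    rw [hQ₁sa, hQ₁idem, ← hQ₁sa]
  have h1 := norm_sub_sq (𝕜 := ℂ) (Q₁ u) ((2 : ℂ) • Q₁ (Q₀ u))
  rw [inner_smul_right, hin, norm_smul] at h1
  rw [h0, h1]
  simp [RCLike.re_to_complex, Complex.mul_re]
  ring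

end AuxLemmas

/-- Purified core of the impossibility theorem: a signing isometry that is approximately
correct for two measurements and secure against reflection attacks forces the measurements
to approximately commute on every (pure) state. -/
theorem signing_forces_commutativity
    {E F : Type*} [NormedAddCommGroup E] [InnerProductSpace ℂ E]
    [NormedAddCommGroup F] [InnerProductSpace ℂ F]
    (V : E →ₗᵢ[ℂ] F)
    (P₀ P₁ : E →L[ℂ] E)
    (hP₀idem : ∀ x, P₀ (P₀ x) = P₀ x)
    (hP₀sa : ∀ x y, ⟪P₀ x, y⟫_ℂ = ⟪x, P₀ y⟫_ℂ)
    (hP₁idem : ∀ x, P₁ (P₁ x) = P₁ x)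
    (hP₁sa : ∀ x y, ⟪P₁ x, y⟫_ℂ = ⟪x, P₁ y⟫_ℂ)
    (Q₀ Q₁ : F →L[ℂ] F)
    (hQ₀idem : ∀ x, Q₀ (Q₀ x) = Q₀ x)
    (hQ₀sa : ∀ x y, ⟪Q₀ x, y⟫_ℂ = ⟪x, Q₀ y⟫_ℂ)
    (hQ₁idem : ∀ x, Q₁ (Q₁ x) = Q₁ x)
    (hQ₁sa : ∀ x y, ⟪Q₁ x, y⟫_ℂ = ⟪x, Q₁ y⟫_ℂ)
    (η ε : ℝ) (hη : 0 ≤ η) (hε : 0 ≤ ε)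
    (hcorr₀ : ∀ φ : E, ‖φ‖ = 1 → |‖Q₀ (V φ)‖ ^ 2 - ‖P₀ φ‖ ^ 2| ≤ η)
    (hcorr₁ : ∀ φ : E, ‖φ‖ = 1 → |‖Q₁ (V φ)‖ ^ 2 - ‖P₁ φ‖ ^ 2| ≤ η)
    (hsec₁ : ∀ ψ : E, ‖ψ‖ = 1 →
      |‖Q₁ (V ψ - (2 : ℂ) • Q₀ (V ψ))‖ ^ 2 - ‖P₁ ψ‖ ^ 2| ≤ ε)
    (hsec₀ : ∀ ψ : E, ‖ψ‖ = 1 →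
      |‖Q₀ (V ψ - (2 : ℂ) • Q₁ (V ψ))‖ ^ 2 - ‖P₀ ψ‖ ^ 2| ≤ ε) :
    ∀ ψ : E, ‖ψ‖ = 1 →
      |‖P₀ (P₁ ψ)‖ ^ 2 - ‖P₁ (P₀ ψ)‖ ^ 2| ≤ (ε + η + 8 * Real.sqrt η) / 2 := by
  intro ψ hψ
  rcases le_or_gt η 1 with hη1 | hη1
  · -- main case
    have hc₀ := corr_hom V P₀ Q₀ η hcorr₀
    have hc₁ := corr_hom V P₁ Q₁ η hcorr₁
    have side1 := side_est V P₀ P₁ hP₀idem hP₀sa Q₀ Q₁ hQ₀idem hQ₀sa hQ₁idem hQ₁sa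
      η hη hη1 hc₀ hc₁ ψ hψ
    have side0 := side_est V P₁ P₀ hP₁idem hP₁sa Q₁ Q₀ hQ₁idem hQ₁sa hQ₀idem hQ₀sa
      η hη hη1 hc₁ hc₀ ψ hψ
    have hexp1 := reflect_expand Q₀ Q₁ hQ₁idem hQ₁sa (V ψ)
    have hexp0 := reflect_expand Q₁ Q₀ hQ₀idem hQ₀sa (V ψ)
    have hsε₁ := hsec₁ ψ hψ
    have hsε₀ := hsec₀ ψ hψ
    have hco1 := hcorr₁ ψ hψ
    have hco0 := hcorr₀ ψ hψ
    rw [hexp1] at hsε₁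
    rw [hexp0] at hsε₀
    have hrr : RCLike.re ⟪Q₀ (V ψ), Q₁ (V ψ)⟫_ℂ
        = RCLike.re ⟪Q₁ (V ψ), Q₀ (V ψ)⟫_ℂ := by
      rw [← inner_conj_symm (Q₁ (V ψ)) (Q₀ (V ψ))]
      exact (RCLike.conj_re _).symm
    rw [hrr] at hsε₀
    rw [abs_le] at hsε₁ hsε₀ hco1 hco0 side1 side0 ⊢
    constructor
    · linarith [hsε₁.1, hsε₁.2, hsε₀.1, hsε₀.2, hco1.1, hco1.2, hco0.1, hco0.2,
        side1.1, side1.2, side0.1, side0.2]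
    · linarith [hsε₁.1, hsε₁.2, hsε₀.1, hsε₀.2, hco1.1, hco1.2, hco0.1, hco0.2,
        side1.1, side1.2, side0.1, side0.2]
  · -- trivial case η > 1
    have h1 : ‖P₀ (P₁ ψ)‖ ≤ 1 := by
      calc ‖P₀ (P₁ ψ)‖ ≤ ‖P₁ ψ‖ := proj_contract P₀ hP₀idem hP₀sa _
        _ ≤ ‖ψ‖ := proj_contract P₁ hP₁idem hP₁sa ψ
        _ = 1 := hψ
    have h2 : ‖P₁ (P₀ ψ)‖ ≤ 1 := by
      calc ‖P₁ (P₀ ψ)‖ ≤ ‖P₀ ψ‖ := proj_contract P₁ hP₁idem hP₁sa _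
        _ ≤ ‖ψ‖ := proj_contract P₀ hP₀idem hP₀sa ψ
        _ = 1 := hψ
    have h3 : 1 ≤ Real.sqrt η := Real.one_le_sqrt.mpr hη1.le
    rw [abs_le]
    constructor
    · nlinarith [norm_nonneg (P₀ (P₁ ψ)), norm_nonneg (P₁ (P₀ ψ))]
    · nlinarith [norm_nonneg (P₀ (P₁ ψ)), norm_nonneg (P₁ (P₀ ψ))]
end

section
/- Let E and F be complex inner product spaces, let V : E → F be a linear isometry, let P₀, P₁ be orthogonal projections on E, let Q₀, Q₁ be orthogonal projections on F, and let η, ε ≥ 0. Assume: (correctness) for every unit vector φ ∈ E and each i ∈ {0,1}, |‖Q_i (V φ)‖² − ‖P_i φ‖²| ≤ η; and (security) for every unit vector ψ ∈ E, |‖Q₁ ((id − 2·Q₀)(V ψ))‖² − ‖P₁ ψ‖²| ≤ ε and |‖Q₀ ((id − 2·Q₁)(V ψ))‖² − ‖P₀ ψ‖²| ≤ ε. For i ∈ {0,1} write Π_i¹ = P_i and Π_i⁰ = id − P_i. Then for every unit vector ψ ∈ E, the total difference of sequential outcome statistics satisfies Σ_{a,b ∈ {0,1}} |‖Π₁ᵇ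 (Π₀ᵃ ψ)‖² − ‖Π₀ᵃ (Π₁ᵇ ψ)‖²| ≤ 2·(ε + η + 8·√η). (This is the full four-outcome form of the commutativity conclusion, Equation (4) of Theorem 3.4, for pure states.) -/
/-!
Write `d(P, R, ψ) = ‖R (P ψ)‖² - re ⟪P ψ, R ψ⟫`; it vanishes when `P` and `R` commute, and the
four-outcome sum equals `2 (|x - y| + |x + y|) ≤ 4 max(|x|, |y|)` for `x = d(P₀, P₁, ψ)`,
`y = d(P₁, P₀, ψ)`.

On `F`, expanding the square gives `‖S (w - 2 Q w)‖² = ‖S w‖² + 4 d(Q, S, w)`, so security and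
correctness together bound `|d(Q, S, V ψ)|` by `(ε + η) / 4`. The error `Q (V φ) - V (P φ)` is the
orthogonal sum of `Q (V (φ - P φ)) ∈ range Q` and `-(1 - Q) (V (P φ)) ∈ ker Q`, and correctness
bounds their squared norms by `η ‖φ - P φ‖²` and `η ‖P φ‖²`; hence `‖Q (V φ) - V (P φ)‖ ≤ √η ‖φ‖`.
This transfers `d(Q, S, V ψ)` back to `d(P, R, ψ)` with an error `√η (2 + c + t + c t) ≤ 4 √η`,
where `c = ‖P ψ‖`, `t = ‖ψ - P ψ‖` and `c² + t² = 1`.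
-/

open scoped InnerProductSpace
open RCLike

namespace LinearMap.IsSymmetricProjection

variable {𝕜 E : Type*} [RCLike 𝕜] [NormedAddCommGroup E] [InnerProductSpace 𝕜 E]
  {P : E →ₗ[𝕜] E}

theorem apply_apply (hP : P.IsSymmetricProjection) (x : E) : P (P x) = P x :=
  LinearMap.congr_fun hP.isIdempotentElem.eq x

theorem inner_apply_apply (hP : P.IsSymmetricProjection) (x y : E) :
    ⟪P x, P y⟫_𝕜 = ⟪P x, y⟫_𝕜 := by
  rw [← hP.isSymmetric, hP.apply_apply]

theorem re_inner_apply_self (hP : P.IsSymmetricProjection) (x : E) :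
    re ⟪P x, x⟫_𝕜 = ‖P x‖ ^ 2 := by
  rw [← hP.inner_apply_apply, inner_self_eq_norm_sq]

theorem inner_apply_sub_apply (hP : P.IsSymmetricProjection) (x y : E) :
    ⟪P x, y - P y⟫_𝕜 = 0 := by
  rw [inner_sub_right, hP.inner_apply_apply, sub_self]

theorem norm_sub_apply_sq (hP : P.IsSymmetricProjection) (x : E) :
    ‖x - P x‖ ^ 2 = ‖x‖ ^ 2 - ‖P x‖ ^ 2 := by
  rw [@norm_sub_sq 𝕜, ← inner_re_symm, hP.re_inner_apply_self]
  ring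

theorem norm_apply_le (hP : P.IsSymmetricProjection) (x : E) : ‖P x‖ ≤ ‖x‖ := by
  refine (pow_le_pow_iff_left₀ (norm_nonneg _) (norm_nonneg _) two_ne_zero).mp ?_
  linarith [hP.norm_sub_apply_sq x, sq_nonneg ‖x - P x‖]

end LinearMap.IsSymmetricProjection

section

variable {𝕜 E F G : Type*} [RCLike 𝕜] [NormedAddCommGroup E] [NormedSpace 𝕜 E]
  [NormedAddCommGroup F] [NormedSpace 𝕜 F] [NormedAddCommGroup G] [NormedSpace 𝕜 G]

theorem abs_norm_sq_sub_norm_sq_le_of_forall_norm_eq_one {A : E →ₗ[𝕜] F} {B : E →ₗ[𝕜] G}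
    {η : ℝ} (h : ∀ φ, ‖φ‖ = 1 → |‖A φ‖ ^ 2 - ‖B φ‖ ^ 2| ≤ η) (φ : E) :
    |‖A φ‖ ^ 2 - ‖B φ‖ ^ 2| ≤ η * ‖φ‖ ^ 2 := by
  rcases eq_or_ne φ 0 with rfl | hφ
  · simp
  set u := (‖φ‖⁻¹ : 𝕜) • φ
  have hφu : φ = (‖φ‖ : 𝕜) • u := by simp [u, smul_smul, hφ]
  have hscale : |‖A φ‖ ^ 2 - ‖B φ‖ ^ 2| = ‖φ‖ ^ 2 * |‖A u‖ ^ 2 - ‖B u‖ ^ 2| := by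
    conv_lhs => rw [hφu]
    simp only [map_smul, norm_smul, norm_ofReal, abs_norm, mul_pow, ← mul_sub, abs_mul, abs_pow]
  rw [hscale, mul_comm η]
  exact mul_le_mul_of_nonneg_left (h u (norm_smul_inv_norm hφ)) (by positivity)

end

section

variable {𝕜 E F : Type*} [RCLike 𝕜] [NormedAddCommGroup E] [InnerProductSpace 𝕜 E]
  [NormedAddCommGroup F] [InnerProductSpace 𝕜 F]
  {P : E →ₗ[𝕜] E} {Q : F →ₗ[𝕜] F} {η : ℝ}

theorem norm_apply_map_sub_map_apply_sq_le (hP : P.IsSymmetricProjection)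
    (hQ : Q.IsSymmetricProjection) (V : E →ₗᵢ[𝕜] F)
    (hcorr : ∀ φ, ‖φ‖ = 1 → |‖Q (V φ)‖ ^ 2 - ‖P φ‖ ^ 2| ≤ η) (φ : E) :
    ‖Q (V φ) - V (P φ)‖ ^ 2 ≤ η * ‖φ‖ ^ 2 := by
  have hcorr' : ∀ φ, |‖Q (V φ)‖ ^ 2 - ‖P φ‖ ^ 2| ≤ η * ‖φ‖ ^ 2 :=
    abs_norm_sq_sub_norm_sq_le_of_forall_norm_eq_one (A := Q ∘ₗ V.toLinearMap) hcorr
  have hsplit : Q (V φ) - V (P φ) = Q (V (φ - P φ)) - (V (P φ) - Q (V (P φ))) := by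
    simp only [map_sub]
    abel
  have horth : ⟪Q (V (φ - P φ)), V (P φ) - Q (V (P φ))⟫_𝕜 = 0 :=
    hQ.inner_apply_sub_apply _ _
  have h₁ : ‖Q (V (φ - P φ))‖ ^ 2 ≤ η * ‖φ - P φ‖ ^ 2 := by
    have hker : P (φ - P φ) = 0 := by rw [map_sub, hP.apply_apply, sub_self]
    simpa [hker] using hcorr' (φ - P φ)
  have h₂ : ‖V (P φ) - Q (V (P φ))‖ ^ 2 ≤ η * ‖P φ‖ ^ 2 := by
    have := neg_le_of_abs_le (hcorr' (P φ))
    rw [hP.apply_apply] at this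
    rw [hQ.norm_sub_apply_sq, V.norm_map]
    linarith
  calc ‖Q (V φ) - V (P φ)‖ ^ 2
      = ‖Q (V (φ - P φ))‖ ^ 2 + ‖V (P φ) - Q (V (P φ))‖ ^ 2 := by
        rw [hsplit, @norm_sub_sq 𝕜, horth, map_zero]
        ring
    _ ≤ η * (‖φ - P φ‖ ^ 2 + ‖P φ‖ ^ 2) := by linarith
    _ = η * ‖φ‖ ^ 2 := by rw [hP.norm_sub_apply_sq, sub_add_cancel]

theorem norm_apply_map_sub_map_apply_le (hP : P.IsSymmetricProjection)
    (hQ : Q.IsSymmetricProjection) (V : E →ₗᵢ[𝕜] F)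
    (hcorr : ∀ φ, ‖φ‖ = 1 → |‖Q (V φ)‖ ^ 2 - ‖P φ‖ ^ 2| ≤ η) (φ : E) :
    ‖Q (V φ) - V (P φ)‖ ≤ √η * ‖φ‖ := by
  rw [← Real.sqrt_sq (norm_nonneg φ), ← Real.sqrt_mul' _ (sq_nonneg _)]
  exact Real.le_sqrt_of_sq_le (norm_apply_map_sub_map_apply_sq_le hP hQ V hcorr φ)

end

theorem abs_sub_add_abs_add_le {x y B : ℝ} (hx : |x| ≤ B) (hy : |y| ≤ B) :
    |x - y| + |x + y| ≤ 2 * B := by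
  obtain ⟨hx₁, hx₂⟩ := abs_le.mp hx
  obtain ⟨hy₁, hy₂⟩ := abs_le.mp hy
  rcases abs_cases (x - y) with ⟨h₁, -⟩ | ⟨h₁, -⟩ <;>
    rcases abs_cases (x + y) with ⟨h₂, -⟩ | ⟨h₂, -⟩ <;> linarith

theorem add_add_mul_le_two_of_sq_add_sq_eq_one {c t : ℝ} (h : c ^ 2 + t ^ 2 = 1) :
    c + t + c * t ≤ 2 := by
  nlinarith [sq_nonneg (c - t), sq_nonneg (c + t - 3 / 2)]

section

variable {𝕜 E F : Type*} [RCLike 𝕜] [NormedAddCommGroup E] [InnerProductSpace 𝕜 E]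
  [NormedAddCommGroup F] [InnerProductSpace 𝕜 F]

theorem abs_re_inner_sub_re_inner_le (u v u' v' : E) :
    |re ⟪u, v⟫_𝕜 - re ⟪u', v'⟫_𝕜| ≤ ‖u - u'‖ * ‖v'‖ + ‖u‖ * ‖v - v'‖ := by
  have h : ⟪u, v⟫_𝕜 - ⟪u', v'⟫_𝕜 = ⟪u - u', v'⟫_𝕜 + ⟪u, v - v'⟫_𝕜 := by
    simp only [inner_sub_left, inner_sub_right]
    ring
  calc |re ⟪u, v⟫_𝕜 - re ⟪u', v'⟫_𝕜| = |re (⟪u - u', v'⟫_𝕜 + ⟪u, v - v'⟫_𝕜)| := by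
        rw [← h, map_sub]
    _ ≤ ‖⟪u - u', v'⟫_𝕜 + ⟪u, v - v'⟫_𝕜‖ := abs_re_le_norm _
    _ ≤ ‖u - u'‖ * ‖v'‖ + ‖u‖ * ‖v - v'‖ :=
        (norm_add_le _ _).trans (add_le_add (norm_inner_le_norm _ _) (norm_inner_le_norm _ _))

def sequentialDefect (P R : E →ₗ[𝕜] E) (ψ : E) : ℝ :=
  ‖R (P ψ)‖ ^ 2 - re ⟪P ψ, R ψ⟫_𝕜

variable {P R : E →ₗ[𝕜] E} {Q S : F →ₗ[𝕜] F}

theorem sequentialDefect_eq_neg_re_inner (hR : R.IsSymmetricProjection) (ψ : E) :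
    sequentialDefect P R ψ = -re ⟪R (P ψ), R (ψ - P ψ)⟫_𝕜 := by
  rw [sequentialDefect, map_sub, inner_sub_right, hR.inner_apply_apply, hR.isSymmetric,
    inner_self_eq_norm_sq_to_K, map_sub, re_ofReal_pow, neg_sub]

theorem LinearMap.IsSymmetricProjection.norm_apply_sub_two_smul_sq (hS : S.IsSymmetricProjection)
    (x : F) :
    ‖S (x - (2 : 𝕜) • Q x)‖ ^ 2 = ‖S x‖ ^ 2 + 4 * sequentialDefect Q S x := by
  rw [map_sub, map_smul, @norm_sub_sq 𝕜, inner_smul_right, hS.inner_apply_apply, norm_smul,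
    sequentialDefect, inner_re_symm (Q x)]
  simp only [mul_re, ofNat_re, ofNat_im, zero_mul, sub_zero, norm_ofNat]
  ring

theorem norm_comp_apply_map_sub_map_comp_apply_le (hS : S.IsSymmetricProjection) (V : E →ₗᵢ[𝕜] F)
    {s : ℝ} (hPQ : ∀ φ, ‖Q (V φ) - V (P φ)‖ ≤ s * ‖φ‖)
    (hRS : ∀ φ, ‖S (V φ) - V (R φ)‖ ≤ s * ‖φ‖) (φ : E) :
    ‖S (Q (V φ)) - V (R (P φ))‖ ≤ s * (‖φ‖ + ‖P φ‖) := by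
  have h : S (Q (V φ)) - V (R (P φ)) = S (Q (V φ) - V (P φ)) + (S (V (P φ)) - V (R (P φ))) := by
    rw [map_sub]
    abel
  rw [h, mul_add]
  exact (norm_add_le _ _).trans (add_le_add ((hS.norm_apply_le _).trans (hPQ φ)) (hRS (P φ)))

theorem abs_sequentialDefect_sub_le (hP : P.IsSymmetricProjection)
    (hR : R.IsSymmetricProjection) (hQ : Q.IsSymmetricProjection) (hS : S.IsSymmetricProjection)
    (V : E →ₗᵢ[𝕜] F) {s : ℝ} (hs : 0 ≤ s) (hPQ : ∀ φ, ‖Q (V φ) - V (P φ)‖ ≤ s * ‖φ‖)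
    (hRS : ∀ φ, ‖S (V φ) - V (R φ)‖ ≤ s * ‖φ‖) {ψ : E} (hψ : ‖ψ‖ = 1) :
    |sequentialDefect P R ψ - sequentialDefect Q S (V ψ)| ≤ 4 * s := by
  set c := ‖P ψ‖
  set t := ‖ψ - P ψ‖
  have hct : c ^ 2 + t ^ 2 = 1 := by rw [hP.norm_sub_apply_sq, hψ]; ring
  have hu : ‖S (Q (V ψ)) - V (R (P ψ))‖ ≤ s * (1 + c) := by
    simpa only [hψ] using norm_comp_apply_map_sub_map_comp_apply_le hS V hPQ hRS ψ
  have hv : ‖S (V ψ - Q (V ψ)) - V (R (ψ - P ψ))‖ ≤ s * (2 + c) := by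
    have h : S (V ψ - Q (V ψ)) - V (R (ψ - P ψ))
        = (S (V ψ) - V (R ψ)) - (S (Q (V ψ)) - V (R (P ψ))) := by
      simp only [map_sub]
      abel
    rw [h]
    calc _ ≤ s * 1 + s * (1 + c) := (norm_sub_le _ _).trans (add_le_add (hψ ▸ hRS ψ) hu)
      _ = s * (2 + c) := by ring
  have hu' : ‖S (Q (V ψ))‖ ≤ 1 :=
    (hS.norm_apply_le _).trans ((hQ.norm_apply_le _).trans (by rw [V.norm_map, hψ]))
  have hv' : ‖V (R (ψ - P ψ))‖ ≤ t := by
    rw [V.norm_map]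
    exact hR.norm_apply_le _
  rw [sequentialDefect_eq_neg_re_inner hR, sequentialDefect_eq_neg_re_inner hS,
    ← V.inner_map_map, neg_sub_neg]
  calc _ ≤ ‖S (Q (V ψ)) - V (R (P ψ))‖ * ‖V (R (ψ - P ψ))‖
        + ‖S (Q (V ψ))‖ * ‖S (V ψ - Q (V ψ)) - V (R (ψ - P ψ))‖ :=
        abs_re_inner_sub_re_inner_le _ _ _ _
    _ ≤ s * (1 + c) * t + 1 * (s * (2 + c)) :=
        add_le_add (mul_le_mul hu hv' (norm_nonneg _) (by positivity))
          (mul_le_mul hu' hv (norm_nonneg _) zero_le_one)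
    _ = s * (2 + (c + t + c * t)) := by ring
    _ ≤ 4 * s := by nlinarith [add_add_mul_le_two_of_sq_add_sq_eq_one hct]

theorem abs_sequentialDefect_le (hP : P.IsSymmetricProjection) (hR : R.IsSymmetricProjection)
    (hQ : Q.IsSymmetricProjection) (hS : S.IsSymmetricProjection) (V : E →ₗᵢ[𝕜] F) {η ε : ℝ}
    (hcorrQ : ∀ φ, ‖φ‖ = 1 → |‖Q (V φ)‖ ^ 2 - ‖P φ‖ ^ 2| ≤ η)
    (hcorrS : ∀ φ, ‖φ‖ = 1 → |‖S (V φ)‖ ^ 2 - ‖R φ‖ ^ 2| ≤ η) {ψ : E} (hψ : ‖ψ‖ = 1)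
    (hsec : |‖S (V ψ - (2 : 𝕜) • Q (V ψ))‖ ^ 2 - ‖R ψ‖ ^ 2| ≤ ε) :
    |sequentialDefect P R ψ| ≤ (ε + η) / 4 + 4 * √η := by
  have hF : |sequentialDefect Q S (V ψ)| ≤ (ε + η) / 4 := by
    rw [hS.norm_apply_sub_two_smul_sq] at hsec
    have hcorr := hcorrS ψ hψ
    rw [abs_le] at hsec hcorr ⊢
    constructor <;> linarith
  have htransfer := abs_sequentialDefect_sub_le hP hR hQ hS V (Real.sqrt_nonneg η)
    (norm_apply_map_sub_map_apply_le hP hQ V hcorrQ)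
    (norm_apply_map_sub_map_apply_le hR hS V hcorrS) hψ
  linarith [abs_sub_abs_le_abs_sub (sequentialDefect P R ψ) (sequentialDefect Q S (V ψ))]

theorem sum_abs_sequential_probability_sub_eq (hP : P.IsSymmetricProjection)
    (hR : R.IsSymmetricProjection) (ψ : E) :
    |‖(ψ - P ψ) - R (ψ - P ψ)‖ ^ 2 - ‖(ψ - R ψ) - P (ψ - R ψ)‖ ^ 2|
        + |‖R (ψ - P ψ)‖ ^ 2 - ‖R ψ - P (R ψ)‖ ^ 2|
        + |‖P ψ - R (P ψ)‖ ^ 2 - ‖P (ψ - R ψ)‖ ^ 2|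
        + |‖R (P ψ)‖ ^ 2 - ‖P (R ψ)‖ ^ 2|
      = 2 * (|sequentialDefect P R ψ - sequentialDefect R P ψ|
        + |sequentialDefect P R ψ + sequentialDefect R P ψ|) := by
  have hx : sequentialDefect P R ψ = ‖R (P ψ)‖ ^ 2 - re ⟪P ψ, R ψ⟫_𝕜 := rfl
  have hy : sequentialDefect R P ψ = ‖P (R ψ)‖ ^ 2 - re ⟪P ψ, R ψ⟫_𝕜 := by
    rw [sequentialDefect, inner_re_symm]
  have hRP : ‖R (ψ - P ψ)‖ ^ 2 = ‖R ψ‖ ^ 2 - 2 * re ⟪P ψ, R ψ⟫_𝕜 + ‖R (P ψ)‖ ^ 2 := by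
    rw [map_sub, @norm_sub_sq 𝕜, hR.inner_apply_apply, inner_re_symm]
  have hPR : ‖P (ψ - R ψ)‖ ^ 2 = ‖P ψ‖ ^ 2 - 2 * re ⟪P ψ, R ψ⟫_𝕜 + ‖P (R ψ)‖ ^ 2 := by
    rw [map_sub, @norm_sub_sq 𝕜, hP.inner_apply_apply]
  have h₀₀ : ‖(ψ - P ψ) - R (ψ - P ψ)‖ ^ 2 - ‖(ψ - R ψ) - P (ψ - R ψ)‖ ^ 2
      = -(sequentialDefect P R ψ - sequentialDefect R P ψ) := by
    rw [hR.norm_sub_apply_sq, hP.norm_sub_apply_sq, hP.norm_sub_apply_sq, hR.norm_sub_apply_sq,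
      hRP, hPR, hx, hy]
    ring
  have h₀₁ : ‖R (ψ - P ψ)‖ ^ 2 - ‖R ψ - P (R ψ)‖ ^ 2
      = sequentialDefect P R ψ + sequentialDefect R P ψ := by
    rw [hP.norm_sub_apply_sq, hRP, hx, hy]
    ring
  have h₁₀ : ‖P ψ - R (P ψ)‖ ^ 2 - ‖P (ψ - R ψ)‖ ^ 2
      = -(sequentialDefect P R ψ + sequentialDefect R P ψ) := by
    rw [hR.norm_sub_apply_sq, hPR, hx, hy]
    ring
  have h₁₁ : ‖R (P ψ)‖ ^ 2 - ‖P (R ψ)‖ ^ 2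
      = sequentialDefect P R ψ - sequentialDefect R P ψ := by
    rw [hx, hy]
    ring
  rw [h₀₀, h₀₁, h₁₀, h₁₁, abs_neg, abs_neg]
  ring

end

/-- Full four-outcome form of the commutativity conclusion for pure states: the total
difference of sequential outcome statistics of the two two-outcome measurements is bounded. -/
theorem signing_forces_commutativity_four_outcomes
    {E F : Type*} [NormedAddCommGroup E] [InnerProductSpace ℂ E]
    [NormedAddCommGroup F] [InnerProductSpace ℂ F]
    (V : E →ₗᵢ[ℂ] F)
    (P₀ P₁ : E →L[ℂ] E)
    (hP₀idem : ∀ x, P₀ (P₀ x) = P₀ x)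
    (hP₀sa : ∀ x y, ⟪P₀ x, y⟫_ℂ = ⟪x, P₀ y⟫_ℂ)
    (hP₁idem : ∀ x, P₁ (P₁ x) = P₁ x)
    (hP₁sa : ∀ x y, ⟪P₁ x, y⟫_ℂ = ⟪x, P₁ y⟫_ℂ)
    (Q₀ Q₁ : F →L[ℂ] F)
    (hQ₀idem : ∀ x, Q₀ (Q₀ x) = Q₀ x)
    (hQ₀sa : ∀ x y, ⟪Q₀ x, y⟫_ℂ = ⟪x, Q₀ y⟫_ℂ)
    (hQ₁idem : ∀ x, Q₁ (Q₁ x) = Q₁ x)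
    (hQ₁sa : ∀ x y, ⟪Q₁ x, y⟫_ℂ = ⟪x, Q₁ y⟫_ℂ)
    (η ε : ℝ) (hη : 0 ≤ η) (hε : 0 ≤ ε)
    (hcorr₀ : ∀ φ : E, ‖φ‖ = 1 → |‖Q₀ (V φ)‖ ^ 2 - ‖P₀ φ‖ ^ 2| ≤ η)
    (hcorr₁ : ∀ φ : E, ‖φ‖ = 1 → |‖Q₁ (V φ)‖ ^ 2 - ‖P₁ φ‖ ^ 2| ≤ η)
    (hsec₁ : ∀ ψ : E, ‖ψ‖ = 1 →
      |‖Q₁ (V ψ - (2 : ℂ) • Q₀ (V ψ))‖ ^ 2 - ‖P₁ ψ‖ ^ 2| ≤ ε)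
    (hsec₀ : ∀ ψ : E, ‖ψ‖ = 1 →
      |‖Q₀ (V ψ - (2 : ℂ) • Q₁ (V ψ))‖ ^ 2 - ‖P₀ ψ‖ ^ 2| ≤ ε) :
    ∀ ψ : E, ‖ψ‖ = 1 →
      |‖((ψ - P₀ ψ) - P₁ (ψ - P₀ ψ))‖ ^ 2 - ‖((ψ - P₁ ψ) - P₀ (ψ - P₁ ψ))‖ ^ 2|
        + |‖P₁ (ψ - P₀ ψ)‖ ^ 2 - ‖(P₁ ψ) - P₀ (P₁ ψ)‖ ^ 2|
        + |‖(P₀ ψ) - P₁ (P₀ ψ)‖ ^ 2 - ‖P₀ (ψ - P₁ ψ)‖ ^ 2|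
        + |‖P₁ (P₀ ψ)‖ ^ 2 - ‖P₀ (P₁ ψ)‖ ^ 2|
        ≤ 2 * (ε + η + 8 * Real.sqrt η) := by
  intro ψ hψ
  have hP₀ : (P₀ : E →ₗ[ℂ] E).IsSymmetricProjection := ⟨LinearMap.ext hP₀idem, hP₀sa⟩
  have hP₁ : (P₁ : E →ₗ[ℂ] E).IsSymmetricProjection := ⟨LinearMap.ext hP₁idem, hP₁sa⟩
  have hQ₀ : (Q₀ : F →ₗ[ℂ] F).IsSymmetricProjection := ⟨LinearMap.ext hQ₀idem, hQ₀sa⟩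
  have hQ₁ : (Q₁ : F →ₗ[ℂ] F).IsSymmetricProjection := ⟨LinearMap.ext hQ₁idem, hQ₁sa⟩
  have hx := abs_sequentialDefect_le hP₀ hP₁ hQ₀ hQ₁ V hcorr₀ hcorr₁ hψ (hsec₁ ψ hψ)
  have hy := abs_sequentialDefect_le hP₁ hP₀ hQ₁ hQ₀ V hcorr₁ hcorr₀ hψ (hsec₀ ψ hψ)
  refine (sum_abs_sequential_probability_sub_eq hP₀ hP₁ ψ).trans_le ?_
  linarith [abs_sub_add_abs_add_le hx hy]
end

section
/- Let E be a complex inner product space, let I be a finite index set, let (γ_i)_{i ∈ I} be an orthonormal family in E, let q : I → ℝ satisfy q_i ≥ 0 for all i and Σ_{i ∈ I} q_i ≤ 1, let A : E → E be a continuous linear map, and let δ > 0 be such that q_i · ‖A γ_i − γ_i‖ ≤ 2·√δ for all i ∈ I. Let P be the orthogonal projection of E onto the subspace spanned by { γ_i : i ∈ I, q_i ≥ (4δ)^{1/6} }. Then for every x ∈ E, ‖A (P x) − P x‖ ≤ (4δ)^{1/6} · ‖x‖. (This is the concluding estimate, with the constants (4δ)^{1/6}, in the proof of Lemma 3.3.)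 -/
/-!
Write `t = (4δ)^(1/6)` and `s = {i | t ≤ q i}`. Since `∑ q ≤ 1`, the set `s` has at most `1/t`
elements, and on `s` the hypothesis gives `‖A γᵢ - γᵢ‖ ≤ 2√δ / t = t²`. Expanding `P x` in the
orthonormal family, the triangle inequality, Cauchy–Schwarz and Bessel's inequality bound
`‖A (P x) - P x‖` by `√#s · t² · ‖x‖ ≤ t^(3/2) ‖x‖ ≤ t ‖x‖`.
-/

open scoped InnerProductSpace
open Finset

section Orthonormal

variable {𝕜 E ι : Type*} [RCLike 𝕜] [NormedAddCommGroup E] [InnerProductSpace 𝕜 E]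
  {γ : ι → E}

theorem Orthonormal.sum_norm_inner_le_sqrt_card_mul (hγ : Orthonormal 𝕜 γ) (s : Finset ι)
    (x : E) : ∑ i ∈ s, ‖⟪γ i, x⟫_𝕜‖ ≤ √(#s) * ‖x‖ := by
  have h_sq : (∑ i ∈ s, ‖⟪γ i, x⟫_𝕜‖) ^ 2 ≤ #s * ‖x‖ ^ 2 :=
    sq_sum_le_card_mul_sum_sq.trans (by gcongr; exact hγ.sum_inner_products_le x)
  rw [← Real.sqrt_sq (norm_nonneg x), ← Real.sqrt_mul (Nat.cast_nonneg _)]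
  exact Real.le_sqrt_of_sq_le h_sq

theorem Orthonormal.norm_sum_inner_smul_le (hγ : Orthonormal 𝕜 γ) (s : Finset ι) {v : ι → E}
    {C : ℝ} (hv : ∀ i ∈ s, ‖v i‖ ≤ C) (x : E) :
    ‖∑ i ∈ s, ⟪γ i, x⟫_𝕜 • v i‖ ≤ √(#s) * C * ‖x‖ := by
  rcases s.eq_empty_or_nonempty with rfl | ⟨i₀, hi₀⟩
  · simp
  have hC : 0 ≤ C := (norm_nonneg _).trans (hv i₀ hi₀)
  calc ‖∑ i ∈ s, ⟪γ i, x⟫_𝕜 • v i‖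
      ≤ ∑ i ∈ s, ‖⟪γ i, x⟫_𝕜‖ * C := norm_sum_le_of_le s fun i hi => by
        rw [norm_smul]; exact mul_le_mul_of_nonneg_left (hv i hi) (norm_nonneg _)
    _ ≤ √(#s) * ‖x‖ * C := by
        rw [← sum_mul]; gcongr; exact hγ.sum_norm_inner_le_sqrt_card_mul s x
    _ = √(#s) * C * ‖x‖ := by ring

theorem Orthonormal.norm_map_sum_inner_smul_sub_le (hγ : Orthonormal 𝕜 γ) {F : Type*}
    [FunLike F E E] [LinearMapClass F 𝕜 E E] (A : F) (s : Finset ι) {ε : ℝ}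
    (hA : ∀ i ∈ s, ‖A (γ i) - γ i‖ ≤ ε) (x : E) :
    ‖A (∑ i ∈ s, ⟪γ i, x⟫_𝕜 • γ i) - ∑ i ∈ s, ⟪γ i, x⟫_𝕜 • γ i‖ ≤ √(#s) * ε * ‖x‖ := by
  simp_rw [map_sum, map_smul, ← sum_sub_distrib, ← smul_sub]
  exact hγ.norm_sum_inner_smul_le s hA x

end Orthonormal

theorem card_filter_le_mul_le_sum {ι : Type*} [Fintype ι] {q : ι → ℝ} (hq : ∀ i, 0 ≤ q i)
    (t : ℝ) : #(univ.filter (fun i => t ≤ q i)) * t ≤ ∑ i, q i := by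
  calc #(univ.filter (fun i => t ≤ q i)) * t
      ≤ ∑ i ∈ univ.filter (fun i => t ≤ q i), q i := by
        rw [← nsmul_eq_mul]; exact card_nsmul_le_sum _ _ _ fun i hi => (mem_filter.mp hi).2
    _ ≤ ∑ i, q i := sum_le_sum_of_subset_of_nonneg (filter_subset _ _) fun i _ _ => hq i

theorem Real.sqrt_natCast_mul_sq_le {n : ℕ} {t : ℝ} (ht : 0 ≤ t) (h : n * t ≤ 1) :
    √n * t ^ 2 ≤ t := by
  have hn : (n : ℝ) ≤ n ^ 2 := by exact_mod_cast Nat.le_self_pow two_ne_zero n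
  have h_sq : n * t ^ 2 ≤ 1 :=
    calc n * t ^ 2 ≤ n ^ 2 * t ^ 2 := by gcongr
      _ = (n * t) ^ 2 := by ring
      _ ≤ 1 := pow_le_one₀ (by positivity) h
  have h_le : √n * t ≤ 1 := by
    rw [← Real.sqrt_sq ht, ← Real.sqrt_mul n.cast_nonneg]
    exact Real.sqrt_le_one.mpr h_sq
  calc √n * t ^ 2 = (√n * t) * t := by ring
    _ ≤ 1 * t := by gcongr
    _ = t := one_mul t

theorem Real.rpow_one_sixth_pow_three {a : ℝ} (ha : 0 ≤ a) : (a ^ ((1 : ℝ) / 6)) ^ 3 = √a := by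
  rw [← Real.rpow_mul_natCast ha, Real.sqrt_eq_rpow]
  norm_num

/-- Concluding estimate (with the constants `(4δ)^(1/6)`) of the truncation argument in the
characterization lemma for encryption maps. -/
theorem truncation_projection_bound_delta
    {E : Type*} [NormedAddCommGroup E] [InnerProductSpace ℂ E]
    {I : Type*} [Fintype I]
    (γ : I → E) (hγ : Orthonormal ℂ γ)
    (q : I → ℝ) (hq0 : ∀ i, 0 ≤ q i) (hq1 : ∑ i, q i ≤ 1)
    (A : E →L[ℂ] E)
    (δ : ℝ) (hδ : 0 < δ)
    (hA : ∀ i, q i * ‖A (γ i) - γ i‖ ≤ 2 * Real.sqrt δ) :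
    ∀ x : E,
      ‖A (∑ i ∈ Finset.univ.filter (fun i => (4 * δ) ^ ((1 : ℝ) / 6) ≤ q i),
            ⟪γ i, x⟫_ℂ • γ i)
          - ∑ i ∈ Finset.univ.filter (fun i => (4 * δ) ^ ((1 : ℝ) / 6) ≤ q i),
              ⟪γ i, x⟫_ℂ • γ i‖
        ≤ (4 * δ) ^ ((1 : ℝ) / 6) * ‖x‖ := by
  intro x
  set t := (4 * δ) ^ ((1 : ℝ) / 6) with ht
  have ht0 : 0 < t := by positivity
  have h_cube : t ^ 3 = 2 * √δ := by
    rw [ht, Real.rpow_one_sixth_pow_three (by positivity), Real.sqrt_mul' _ hδ.le,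
      show (4 : ℝ) = 2 ^ 2 by norm_num, Real.sqrt_sq zero_le_two]
  have h_defect : ∀ i ∈ univ.filter (fun i => t ≤ q i), ‖A (γ i) - γ i‖ ≤ t ^ 2 := by
    intro i hi
    have h_le : t * ‖A (γ i) - γ i‖ ≤ t * t ^ 2 :=
      calc t * ‖A (γ i) - γ i‖ ≤ q i * ‖A (γ i) - γ i‖ := by
            gcongr; exact (mem_filter.mp hi).2
        _ ≤ 2 * √δ := hA i
        _ = t * t ^ 2 := by rw [← h_cube]; ring
    exact le_of_mul_le_mul_left h_le ht0
  have h_card := (card_filter_le_mul_le_sum hq0 t).trans hq1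
  calc _ ≤ √(#(univ.filter (fun i => t ≤ q i))) * t ^ 2 * ‖x‖ :=
        hγ.norm_map_sum_inner_smul_sub_le A _ h_defect x
    _ ≤ t * ‖x‖ := by gcongr; exact Real.sqrt_natCast_mul_sq_le ht0.le h_card
end

section
/- Let E and F be finite-dimensional complex inner product spaces, let V : E → F be a linear isometry, let P be an orthogonal projection on E, let Q be an orthogonal projection on F, and let η ≥ 0. Suppose (correctness) that |‖Q (V φ)‖² − ‖P φ‖²| ≤ η for every unit vector φ ∈ E. Let ψ₀ and ψ₁ be unit vectors of E with P ψ₀ = 0 and P ψ₁ = ψ₁. Then there exists a unitary operator W on F such that W (V ψ₀) = V ψ₁; consequently ‖Q (W (V ψ₀))‖² ≥ 1 − η while ‖Q (V ψ₀)‖² ≤ η. (This is the mathematical core of Theorem 3.5: for a fully correct signing isometry, an attacker acting unitarily on signatures can convert a valid signature of a state with measurement outcome 0 into a valid signature of a state with measurement outcome 1, flipping the outcome of the measurement Q with probability at least 1 − η.) -/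
open scoped InnerProductSpace

/-!
Since `V` is isometric, `V ψ₀` and `V ψ₁` are unit vectors, and the unitary group of a
finite-dimensional space acts transitively on its unit sphere (complete each unit vector to an
orthonormal basis and map one basis to the other). Correctness at `ψ₀` and at `ψ₁` then gives
the two bounds.
-/

section UnitaryTransitivity

open Module

variable {𝕜 E : Type*} [RCLike 𝕜] [NormedAddCommGroup E] [InnerProductSpace 𝕜 E]
  [FiniteDimensional 𝕜 E]

lemma exists_orthonormalBasis_apply_eq {ι : Type*} [Fintype ι]
    (card_ι : finrank 𝕜 E = Fintype.card ι) (i : ι) {x : E} (hx : ‖x‖ = 1) :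
    ∃ b : OrthonormalBasis ι 𝕜 E, b i = x := by
  have hv : Orthonormal 𝕜 (({i} : Set ι).domRestrict fun _ => x) :=
    orthonormal_subsingleton_iff.2 fun _ => hx
  obtain ⟨b, hb⟩ := hv.exists_orthonormalBasis_extension_of_card_eq card_ι
  exact ⟨b, hb i rfl⟩

lemma exists_linearIsometryEquiv_apply_eq {x y : E} (hx : ‖x‖ = 1) (hy : ‖y‖ = 1) :
    ∃ W : E ≃ₗᵢ[𝕜] E, W x = y := by
  have hx₀ : x ≠ 0 := ne_zero_of_norm_ne_zero (hx ▸ one_ne_zero)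
  have hpos : 0 < finrank 𝕜 E := finrank_pos_iff_exists_ne_zero.2 ⟨x, hx₀⟩
  have card : finrank 𝕜 E = Fintype.card (Fin (finrank 𝕜 E)) := (Fintype.card_fin _).symm
  obtain ⟨b₀, hb₀⟩ := exists_orthonormalBasis_apply_eq card ⟨0, hpos⟩ hx
  obtain ⟨b₁, hb₁⟩ := exists_orthonormalBasis_apply_eq card ⟨0, hpos⟩ hy
  refine ⟨b₀.repr.trans b₁.repr.symm, ?_⟩
  simp [← hb₀, ← hb₁, b₀.repr_self]

end UnitaryTransitivity

theorem signature_forgery_attack_general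
    {E F : Type*} [NormedAddCommGroup E] [InnerProductSpace ℂ E]
    [NormedAddCommGroup F] [InnerProductSpace ℂ F]
    [FiniteDimensional ℂ F]
    (V : E →ₗᵢ[ℂ] F)
    (P : E →L[ℂ] E)
    (Q : F →L[ℂ] F)
    (η : ℝ)
    (hcorr : ∀ φ : E, ‖φ‖ = 1 → |‖Q (V φ)‖ ^ 2 - ‖P φ‖ ^ 2| ≤ η)
    (ψ₀ ψ₁ : E) (hψ₀ : ‖ψ₀‖ = 1) (hψ₁ : ‖ψ₁‖ = 1)
    (hP₀ : P ψ₀ = 0) (hP₁ : P ψ₁ = ψ₁) :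
    ∃ W : F ≃ₗᵢ[ℂ] F,
      W (V ψ₀) = V ψ₁
        ∧ 1 - η ≤ ‖Q (W (V ψ₀))‖ ^ 2
        ∧ ‖Q (V ψ₀)‖ ^ 2 ≤ η := by
  obtain ⟨W, hW⟩ := exists_linearIsometryEquiv_apply_eq (𝕜 := ℂ)
    ((V.norm_map ψ₀).trans hψ₀) ((V.norm_map ψ₁).trans hψ₁)
  have hc₀ := abs_le.1 (hcorr ψ₀ hψ₀)
  have hc₁ := abs_le.1 (hcorr ψ₁ hψ₁)
  rw [hP₀, norm_zero] at hc₀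
  rw [hP₁, hψ₁] at hc₁
  refine ⟨W, hW, ?_, ?_⟩
  · rw [hW]
    linarith [hc₁.1]
  · linarith [hc₀.2]

/-- Core of the full-correctness impossibility theorem: for a fully correct signing isometry,
an attacker acting unitarily on signatures can convert a valid signature of a state with
measurement outcome `0` into a valid signature of a state with measurement outcome `1`,
flipping the outcome of the verification-side measurement `Q` with probability at least
`1 − η`. -/
theorem signature_forgery_attack
    {E F : Type*} [NormedAddCommGroup E] [InnerProductSpace ℂ E]
    [NormedAddCommGroup F] [InnerProductSpace ℂ F]
    [FiniteDimensional ℂ E] [FiniteDimensional ℂ F]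
    (V : E →ₗᵢ[ℂ] F)
    (P : E →L[ℂ] E)
    (hPidem : ∀ x, P (P x) = P x)
    (hPsa : ∀ x y, ⟪P x, y⟫_ℂ = ⟪x, P y⟫_ℂ)
    (Q : F →L[ℂ] F)
    (hQidem : ∀ x, Q (Q x) = Q x)
    (hQsa : ∀ x y, ⟪Q x, y⟫_ℂ = ⟪x, Q y⟫_ℂ)
    (η : ℝ) (hη : 0 ≤ η)
    (hcorr : ∀ φ : E, ‖φ‖ = 1 → |‖Q (V φ)‖ ^ 2 - ‖P φ‖ ^ 2| ≤ η)
    (ψ₀ ψ₁ : E) (hψ₀ : ‖ψ₀‖ = 1) (hψ₁ : ‖ψ₁‖ = 1)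
    (hP₀ : P ψ₀ = 0) (hP₁ : P ψ₁ = ψ₁) :
    ∃ W : F ≃ₗᵢ[ℂ] F,
      W (V ψ₀) = V ψ₁
        ∧ 1 - η ≤ ‖Q (W (V ψ₀))‖ ^ 2
        ∧ ‖Q (V ψ₀)‖ ^ 2 ≤ η :=
  signature_forgery_attack_general V P Q η hcorr ψ₀ ψ₁ hψ₀ hψ₁ hP₀ hP₁
end
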